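/- Let X be a proper geodesic metric space with basepoint o, let b : [0,∞) → X be a geodesic ray based at o whose image Z is ρ-contracting for a sublinear function ρ, and let α be a continuous (q,Q)-quasi-geodesic ray based at o. Let r < R and m satisfy max(q,Q) ≤ m ≤ √R/2 and ρ(√R/2) < √R/2. Suppose d(α_r, Z) ≤ m, d(α_R, Z) ≤ m, and d(α(t), Z) ≥ κ(ρ,q,Q) for all t ∈ [t_r, t_R]. Then diam(π_Z(α_r) ∪ π_Z(α_R)) ≤ 3√R. -/
import Mathlib
open Metric Set Filter
/-- A sublinear function `ρ : [0,∞) → [1,∞)`: nondecreasing, concave, with `ρ(x)/x → 0`. -/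
structure IsSublinear (ρ : ℝ → ℝ) : Prop where
  one_le : ∀ x ≥ (0:ℝ), 1 ≤ ρ x
  mono : MonotoneOn ρ (Set.Ici (0:ℝ))
  concave : ConcaveOn ℝ (Set.Ici (0:ℝ)) ρ
  tendsto : Filter.Tendsto (fun x => ρ x / x) Filter.atTop (nhds 0)

/-- `κ(ρ,q,Q) = max {3q, 3q², 3Q, 3Q², 1 + inf {R > 0 | ∀ r ≥ R, 3q²ρ(r) < r}}`. -/
noncomputable def kappa (ρ : ℝ → ℝ) (q Q : ℝ) : ℝ :=
  max (max (max (3*q) (3*q^2)) (max (3*Q) (3*Q^2)))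
    (1 + sInf {R : ℝ | 0 < R ∧ ∀ r ≥ R, 3*q^2 * ρ r < r})

/-- `γ` is a `(q,Q)`-quasi-geodesic on the interval `I`. -/
def IsQGOn {X : Type*} [MetricSpace X] (q Q : ℝ) (γ : ℝ → X) (I : Set ℝ) : Prop :=
  ∀ s ∈ I, ∀ t ∈ I,
    (1/q) * |s - t| - Q ≤ dist (γ s) (γ t) ∧ dist (γ s) (γ t) ≤ q * |s - t| + Q

/-- A geodesic ray based at `o`. -/
def IsGeodesicRay {X : Type*} [MetricSpace X] (o : X) (b : ℝ → X) : Prop :=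
  b 0 = o ∧ ∀ s ∈ Set.Ici (0:ℝ), ∀ t ∈ Set.Ici (0:ℝ), dist (b s) (b t) = |s - t|

/-- A geodesic metric space: any two points are joined by a geodesic segment. -/
def IsGeodesicSpace (X : Type*) [MetricSpace X] : Prop :=
  ∀ x y : X, ∃ f : ℝ → X, f 0 = x ∧ f (dist x y) = y ∧
    ∀ s ∈ Set.Icc 0 (dist x y), ∀ t ∈ Set.Icc 0 (dist x y), dist (f s) (f t) = |s - t|

/-- The closest-point projection `π_Z(x) = { z ∈ Z | d(x,z) = d(x,Z) }`. -/
def proj {X : Type*} [MetricSpace X] (Z : Set X) (x : X) : Set X :=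
  {z ∈ Z | dist x z = Metric.infDist x Z}

/-- `Z` is `ρ`-contracting. -/
def IsContracting {X : Type*} [MetricSpace X] (ρ : ℝ → ℝ) (Z : Set X) : Prop :=
  ∀ x y : X, dist x y ≤ Metric.infDist x Z →
    Metric.diam (proj Z x ∪ proj Z y) ≤ ρ (Metric.infDist x Z)

/-- The first time `t_r` at which a ray based at `o` reaches distance `r` from `o`. -/
noncomputable def firstTime {X : Type*} [MetricSpace X] (o : X) (α : ℝ → X) (r : ℝ) : ℝ :=
  sInf {t : ℝ | 0 ≤ t ∧ dist o (α t) = r}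

/-- The infimal distance between two subsets of a metric space. -/
noncomputable def setDist {X : Type*} [MetricSpace X] (A B : Set X) : ℝ :=
  sInf (Set.image2 dist A B)

/-- `Z` is strongly 1-Morse with gauge `m` (a proper function with `m q Q ≥ max q Q`):
for every sublinear `κ'` and every `r > 0` there is `R > 0` such that every continuous
`(q,Q)`-quasi-geodesic ray `β` based at `o` with `m q Q ≤ r/2` and `d(β_R, Z) ≤ κ'(R)`
satisfies `β|_r ⊆ N(Z, m q Q)`. -/
structure IsStronglyOneMorse {X : Type*} [MetricSpace X] (o : X) (Z : Set X)
    (m : ℝ → ℝ → ℝ) : Prop where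
  gauge_ge : ∀ q, 1 ≤ q → ∀ Q, 0 ≤ Q → max q Q ≤ m q Q
  morse : ∀ κ' : ℝ → ℝ, IsSublinear κ' → ∀ r > (0:ℝ), ∃ R > (0:ℝ),
    ∀ q, 1 ≤ q → ∀ Q, 0 ≤ Q → ∀ β : ℝ → X,
      ContinuousOn β (Set.Ici 0) → IsQGOn q Q β (Set.Ici 0) → β 0 = o →
      m q Q ≤ r / 2 → Metric.infDist (β (firstTime o β R)) Z ≤ κ' R →
      ∀ t ∈ Set.Icc 0 (firstTime o β r), Metric.infDist (β t) Z ≤ m q Q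


lemma diam_union3 {X : Type*} [MetricSpace X] {A B C : Set X} (hB : B.Nonempty)
    (hAB : Bornology.IsBounded (A ∪ B)) (hBC : Bornology.IsBounded (B ∪ C)) :
    Metric.diam (A ∪ C) ≤ Metric.diam (A ∪ B) + Metric.diam (B ∪ C) := by
  obtain ⟨b₀, hb₀⟩ := hB
  apply Metric.diam_le_of_forall_dist_le (add_nonneg Metric.diam_nonneg Metric.diam_nonneg)
  rintro p (hp | hp) w (hw | hw)
  · exact le_add_of_le_of_nonneg
      (Metric.dist_le_diam_of_mem hAB (Or.inl hp) (Or.inl hw)) Metric.diam_nonneg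
  · calc dist p w ≤ dist p b₀ + dist b₀ w := dist_triangle _ _ _
      _ ≤ _ := add_le_add (Metric.dist_le_diam_of_mem hAB (Or.inl hp) (Or.inr hb₀))
          (Metric.dist_le_diam_of_mem hBC (Or.inl hb₀) (Or.inr hw))
  · calc dist p w ≤ dist p b₀ + dist b₀ w := dist_triangle _ _ _
      _ ≤ _ := add_le_add (Metric.dist_le_diam_of_mem hBC (Or.inr hp) (Or.inl hb₀))
          (Metric.dist_le_diam_of_mem hAB (Or.inr hb₀) (Or.inl hw))
      _ = _ := add_comm _ _
  · exact le_add_of_nonneg_of_le Metric.diam_nonneg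
      (Metric.dist_le_diam_of_mem hBC (Or.inr hp) (Or.inr hw))

lemma proj_bounded {X : Type*} [MetricSpace X] (Z : Set X) (x : X) :
    Bornology.IsBounded (proj Z x) :=
  (Metric.isBounded_closedBall (x := x) (r := Metric.infDist x Z)).subset
    (fun z hz => by
      simp only [Metric.mem_closedBall]
      rw [dist_comm]; exact le_of_eq hz.2)

lemma proj_nonempty {X : Type*} [MetricSpace X] [ProperSpace X] {Z : Set X}
    (hcl : IsClosed Z) (hne : Z.Nonempty) (x : X) : (proj Z x).Nonempty := by
  obtain ⟨z, hz, hd⟩ := hcl.exists_infDist_eq_dist hne x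
  exact ⟨z, hz, hd.symm⟩

lemma kappa_facts {ρ : ℝ → ℝ} (hρ : IsSublinear ρ) {q Q : ℝ} (hq : 1 ≤ q) (hQ : 0 ≤ Q) :
    3*q ≤ kappa ρ q Q ∧ 3*Q ≤ kappa ρ q Q ∧ ∀ d, kappa ρ q Q ≤ d → 3*q^2*ρ d < d := by
  have hq0 : (0:ℝ) < q := lt_of_lt_of_le one_pos hq
  refine ⟨le_max_of_le_left (le_max_of_le_left (le_max_left _ _)),
    le_max_of_le_left (le_max_of_le_right (le_max_left _ _)), ?_⟩
  intro d hd
  set S := {R : ℝ | 0 < R ∧ ∀ r ≥ R, 3*q^2 * ρ r < r} with hS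
  have hSne : S.Nonempty := by
    have h3q : (0:ℝ) < 1/(3*q^2) := by positivity
    have hev : ∀ᶠ x in atTop, ρ x / x < 1/(3*q^2) :=
      hρ.tendsto.eventually_lt_const h3q
    rw [Filter.eventually_atTop] at hev
    obtain ⟨a, ha⟩ := hev
    refine ⟨max a 1, lt_of_lt_of_le one_pos (le_max_right _ _), ?_⟩
    intro x hx
    have hx1 : (1:ℝ) ≤ x := le_trans (le_max_right a 1) hx
    have h := ha x (le_trans (le_max_left a 1) hx)
    rw [div_lt_div_iff₀ (by linarith) (by positivity)] at h
    nlinarith [h]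
  have hbdd : BddBelow S := ⟨0, fun x hx => hx.1.le⟩
  have h1 : 1 + sInf S ≤ kappa ρ q Q := le_max_right _ _
  have h2 : sInf S < d := by linarith [le_trans h1 hd]
  obtain ⟨R', hR', hR'd⟩ := exists_lt_of_csInf_lt hSne h2
  exact hR'.2 d hR'd.le

lemma ray_image_closed {X : Type*} [MetricSpace X] {o : X} {b : ℝ → X}
    (hb0 : b 0 = o) (hbi : ∀ s ∈ Set.Ici (0:ℝ), ∀ t ∈ Set.Ici (0:ℝ), dist (b s) (b t) = |s - t|) :
    IsClosed (b '' Set.Ici 0) := by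
  rw [← isSeqClosed_iff_isClosed]
  intro u z hu huz
  have hs : ∀ n, b (dist o (u n)) = u n := by
    intro n
    obtain ⟨s, hs0, hbs⟩ := hu n
    have he : dist o (u n) = s := by
      rw [← hbs, ← hb0, hbi 0 (Set.mem_Ici.2 le_rfl) s hs0, zero_sub, abs_neg, abs_of_nonneg hs0]
    rw [he, hbs]
  have hL : Tendsto (fun n => dist o (u n)) atTop (nhds (dist o z)) :=
    tendsto_const_nhds.dist huz
  have hbL : Tendsto (fun n => b (dist o (u n))) atTop (nhds (b (dist o z))) := by
    rw [tendsto_iff_dist_tendsto_zero]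
    have he : ∀ n, dist (b (dist o (u n))) (b (dist o z)) = |dist o (u n) - dist o z| :=
      fun n => hbi _ (Set.mem_Ici.2 dist_nonneg) _ (Set.mem_Ici.2 dist_nonneg)
    simp only [he]
    have h0 := (hL.sub_const (dist o z)).abs
    simpa using h0
  have huz' : Tendsto u atTop (nhds (b (dist o z))) := hbL.congr fun n => hs n
  have hz : z = b (dist o z) := tendsto_nhds_unique huz huz'
  exact ⟨dist o z, dist_nonneg, hz.symm⟩

lemma firstTime_spec {X : Type*} [MetricSpace X] {o : X} {α : ℝ → X} {q Q : ℝ}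
    (hq : 1 ≤ q) (hQ : 0 ≤ Q) (hαc : ContinuousOn α (Set.Ici 0))
    (hαq : IsQGOn q Q α (Set.Ici 0)) (hα0 : α 0 = o) {c : ℝ} (hc : 0 < c) :
    0 ≤ firstTime o α c ∧ dist o (α (firstTime o α c)) = c ∧
      ∀ t, 0 ≤ t → dist o (α t) = c → firstTime o α c ≤ t := by
  have hq0 : (0:ℝ) < q := lt_of_lt_of_le one_pos hq
  have hcont : ContinuousOn (fun t => dist o (α t)) (Set.Ici 0) :=
    (Continuous.dist continuous_const continuous_id).comp_continuousOn hαc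
  set S := {t : ℝ | 0 ≤ t ∧ dist o (α t) = c} with hS
  have hScl : IsClosed S := by
    have he : S = Set.Ici 0 ∩ (fun t => dist o (α t)) ⁻¹' {c} := by
      ext t; simp [hS, Set.mem_setOf_eq]
    rw [he]
    exact hcont.preimage_isClosed_of_isClosed isClosed_Ici isClosed_singleton
  have hg0 : dist o (α 0) = 0 := by rw [hα0, dist_self]
  have hSne : S.Nonempty := by
    set T := q * (c + Q) with hT
    have hT0 : 0 ≤ T := by positivity
    have hgT : c ≤ dist o (α T) := by
      have h := (hαq 0 (Set.mem_Ici.2 le_rfl) T (Set.mem_Ici.2 hT0)).1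
      rw [hα0, zero_sub, abs_neg, abs_of_nonneg hT0] at h
      rw [hT] at h
      have : (1/q) * (q * (c + Q)) = c + Q := by field_simp
      rw [this] at h
      linarith
    obtain ⟨t, ht, hgt⟩ := intermediate_value_Icc hT0
      (hcont.mono (Set.Icc_subset_Ici_self)) (by rw [hg0]; exact ⟨hc.le, hgT⟩)
    exact ⟨t, ht.1, hgt⟩
  have hbdd : BddBelow S := ⟨0, fun t ht => ht.1⟩
  have hmem : sInf S ∈ S := hScl.csInf_mem hSne hbdd
  exact ⟨hmem.1, hmem.2, fun t ht hdt => csInf_le hbdd ⟨ht, hdt⟩⟩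

set_option maxHeartbeats 2000000 in
/-- If a quasi-geodesic ray stays kappa-far from the contracting geodesic Z between times
t_r and t_R while its endpoints at those times are m-close to Z, then the projections of
those endpoints have diameter at most 3 sqrt(R). -/
theorem stmt_9 {X : Type*} [MetricSpace X] [ProperSpace X] (hX : IsGeodesicSpace X)
    (o : X) (b : ℝ → X) (hb : IsGeodesicRay o b)
    (ρ : ℝ → ℝ) (hρ : IsSublinear ρ) (hcon : IsContracting ρ (b '' Set.Ici 0))
    (q Q : ℝ) (hq : 1 ≤ q) (hQ : 0 ≤ Q)
    (α : ℝ → X) (hαc : ContinuousOn α (Set.Ici 0))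
    (hαq : IsQGOn q Q α (Set.Ici 0)) (hα0 : α 0 = o)
    (r R : ℝ) (hr : 0 < r) (hrR : r < R)
    (m : ℝ) (hm1 : max q Q ≤ m) (hm2 : m ≤ Real.sqrt R / 2)
    (h3 : ρ (Real.sqrt R / 2) < Real.sqrt R / 2)
    (hαr : Metric.infDist (α (firstTime o α r)) (b '' Set.Ici 0) ≤ m)
    (hαR : Metric.infDist (α (firstTime o α R)) (b '' Set.Ici 0) ≤ m)
    (hfar : ∀ t ∈ Set.Icc (firstTime o α r) (firstTime o α R),
      kappa ρ q Q ≤ Metric.infDist (α t) (b '' Set.Ici 0)) :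
    Metric.diam (proj (b '' Set.Ici 0) (α (firstTime o α r))
        ∪ proj (b '' Set.Ici 0) (α (firstTime o α R)))
      ≤ 3 * Real.sqrt R := by
  have hq0 : (0:ℝ) < q := lt_of_lt_of_le one_pos hq
  have hq2 : (1:ℝ) ≤ q^2 := by nlinarith
  set Z : Set X := b '' Set.Ici 0 with hZdef
  have hoZ : o ∈ Z := ⟨0, Set.mem_Ici.2 le_rfl, hb.1⟩
  have hZne : Z.Nonempty := ⟨o, hoZ⟩
  have hZcl : IsClosed Z := ray_image_closed hb.1 hb.2
  obtain ⟨hκq, hκQ, hκρ⟩ := kappa_facts hρ hq hQ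
  obtain ⟨htr0, hdr, hmin⟩ := firstTime_spec hq hQ hαc hαq hα0 hr
  obtain ⟨htR0, hdR, -⟩ := firstTime_spec hq hQ hαc hαq hα0 (hr.trans hrR)
  set tr := firstTime o α r with htrdef
  set tR := firstTime o α R with htRdef
  have hcont : ContinuousOn (fun t => dist o (α t)) (Set.Ici 0) :=
    (Continuous.dist continuous_const continuous_id).comp_continuousOn hαc
  -- tr ≤ tR
  have htrR : tr ≤ tR := by
    have hg0 : dist o (α 0) = 0 := by rw [hα0, dist_self]
    obtain ⟨t, ht, hgt⟩ := intermediate_value_Icc htR0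
      (hcont.mono Set.Icc_subset_Ici_self)
      (by rw [hg0, hdR]; exact ⟨hr.le, hrR.le⟩)
    exact le_trans (hmin t ht.1 hgt) ht.2
  have hQm : Q ≤ m := le_trans (le_max_right _ _) hm1
  have hqm : q ≤ m := le_trans (le_max_left _ _) hm1
  -- stop case
  have hstop : ∀ t, tr ≤ t → t ≤ tR → dist (α t) (α tR) ≤ Metric.infDist (α t) Z →
      Metric.diam (proj Z (α t) ∪ proj Z (α tR)) ≤ (tR - t)/(2*q) + (Q+m)/(3*q^2) := by
    intro t ht1 ht2 hle
    have ht0 : (0:ℝ) ≤ t := le_trans htr0 ht1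
    have hd := hcon (α t) (α tR) hle
    have hκt := hfar t ⟨ht1, ht2⟩
    have hρd := hκρ _ hκt
    set d := Metric.infDist (α t) Z with hddef
    have hdt : d ≤ q*(tR - t) + Q + m := by
      have h1 : d ≤ Metric.infDist (α tR) Z + dist (α t) (α tR) :=
        Metric.infDist_le_infDist_add_dist
      have h2 := (hαq t (Set.mem_Ici.2 ht0) tR (Set.mem_Ici.2 htR0)).2
      rw [abs_sub_comm, abs_of_nonneg (by linarith)] at h2
      linarith [hαR]
    have e1 : Metric.diam (proj Z (α t) ∪ proj Z (α tR)) ≤ d / (3*q^2) := by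
      rw [le_div_iff₀ (by positivity)]
      nlinarith [mul_le_mul_of_nonneg_right hd (show (0:ℝ) ≤ 3*q^2 by positivity)]
    have e2 : d/(3*q^2) ≤ (q*(tR - t))/(3*q^2) + (Q+m)/(3*q^2) := by
      rw [← add_div]
      exact (div_le_div_iff_of_pos_right (by positivity)).2 (by linarith)
    have e3 : (q*(tR - t))/(3*q^2) ≤ (tR - t)/(2*q) := by
      rw [div_le_div_iff₀ (by positivity) (by positivity)]
      nlinarith [mul_nonneg (mul_nonneg hq0.le hq0.le) (sub_nonneg.2 ht2)]
    linarith
  -- step case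
  have hstep : ∀ t, tr ≤ t → t ≤ tR → Metric.infDist (α t) Z < dist (α t) (α tR) →
      ∃ t', t + 2 ≤ t' ∧ t' ≤ tR ∧ dist (α t) (α t') = Metric.infDist (α t) Z ∧
        Metric.infDist (α t) Z ≤ (3*q/2)*(t' - t) := by
    intro t ht1 ht2 hlt
    have ht0 : (0:ℝ) ≤ t := le_trans htr0 ht1
    have hκt := hfar t ⟨ht1, ht2⟩
    set d := Metric.infDist (α t) Z with hddef
    have hd0 : 0 ≤ d := Metric.infDist_nonneg
    have hcont2 : ContinuousOn (fun s => dist (α t) (α s)) (Set.Icc t tR) :=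
      (Continuous.dist continuous_const continuous_id).comp_continuousOn
        (hαc.mono (fun s hs => le_trans ht0 hs.1))
    obtain ⟨t', ht', hft'⟩ := intermediate_value_Icc ht2 hcont2
      (by rw [dist_self]; exact ⟨hd0, hlt.le⟩)
    have hft'' : dist (α t) (α t') = d := hft'
    have ht'0 : (0:ℝ) ≤ t' := le_trans ht0 ht'.1
    have h2 := (hαq t (Set.mem_Ici.2 ht0) t' (Set.mem_Ici.2 ht'0)).2
    rw [abs_sub_comm, abs_of_nonneg (sub_nonneg.2 ht'.1), hft''] at h2
    -- d ≤ q (t' - t) + Q, with 3Q ≤ κ ≤ d and 3q ≤ κ ≤ d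
    have hstep1 : (2/3)*d ≤ q*(t' - t) := by linarith
    refine ⟨t', ?_, ht'.2, hft'', ?_⟩
    · nlinarith [hq0]
    · linarith
  -- main induction
  have key : ∀ n : ℕ, ∀ t : ℝ, tr ≤ t → t ≤ tR → tR - t ≤ 2 * n →
      Metric.diam (proj Z (α t) ∪ proj Z (α tR)) ≤ (tR - t)/(2*q) + (Q+m)/(3*q^2) := by
    intro n
    induction n with
    | zero =>
      intro t ht1 ht2 hn
      rcases le_or_gt (dist (α t) (α tR)) (Metric.infDist (α t) Z) with h | h
      · exact hstop t ht1 ht2 h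
      · obtain ⟨t', h2, h3, -, -⟩ := hstep t ht1 ht2 h
        exfalso
        simp only [Nat.cast_zero, mul_zero] at hn
        linarith
    | succ n ih =>
      intro t ht1 ht2 hn
      rcases le_or_gt (dist (α t) (α tR)) (Metric.infDist (α t) Z) with h | h
      · exact hstop t ht1 ht2 h
      · obtain ⟨t', h2, h3, heq, hle⟩ := hstep t ht1 ht2 h
        have ht'1 : tr ≤ t' := le_trans ht1 (by linarith)
        have hih := ih t' ht'1 h3 (by push_cast at hn ⊢; linarith)
        have hchain := diam_union3 (proj_nonempty hZcl hZne (α t'))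
          ((proj_bounded Z (α t)).union (proj_bounded Z (α t')))
          ((proj_bounded Z (α t')).union (proj_bounded Z (α tR)))
        have hcon1 := hcon (α t) (α t') (le_of_eq heq)
        have hρd := hκρ _ (hfar t ⟨ht1, ht2⟩)
        have a1 : Metric.diam (proj Z (α t) ∪ proj Z (α t')) ≤
            Metric.infDist (α t) Z / (3*q^2) := by
          rw [le_div_iff₀ (by positivity)]
          nlinarith [mul_le_mul_of_nonneg_right hcon1 (show (0:ℝ) ≤ 3*q^2 by positivity)]
        have a2 : Metric.infDist (α t) Z / (3*q^2) ≤ (t' - t)/(2*q) := by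
          rw [div_le_div_iff₀ (by positivity) (by positivity)]
          nlinarith [mul_le_mul_of_nonneg_right hle (show (0:ℝ) ≤ 2*q by positivity)]
        have e1 : Metric.diam (proj Z (α t) ∪ proj Z (α t')) ≤ (t' - t)/(2*q) :=
          le_trans a1 a2
        have e2 : (t' - t)/(2*q) + ((tR - t')/(2*q) + (Q+m)/(3*q^2))
            = (tR - t)/(2*q) + (Q+m)/(3*q^2) := by ring
        linarith
  -- apply key
  have hn : tR - tr ≤ 2 * ((⌈tR - tr⌉₊ : ℕ) : ℝ) := by
    have h1 := Nat.le_ceil (tR - tr)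
    have h2 : (0:ℝ) ≤ ((⌈tR - tr⌉₊ : ℕ) : ℝ) := Nat.cast_nonneg _
    linarith
  have hD := key ⌈tR - tr⌉₊ tr le_rfl htrR hn
  obtain ⟨zx, hzxZ, hzx⟩ := proj_nonempty hZcl hZne (α tr)
  obtain ⟨zy, hzyZ, hzy⟩ := proj_nonempty hZcl hZne (α tR)
  set D := Metric.diam (proj Z (α tr) ∪ proj Z (α tR)) with hDdef
  have hD0 : 0 ≤ D := Metric.diam_nonneg
  have hzz : dist zx zy ≤ D :=
    Metric.dist_le_diam_of_mem ((proj_bounded Z (α tr)).union (proj_bounded Z (α tR)))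
      (Or.inl ⟨hzxZ, hzx⟩) (Or.inr ⟨hzyZ, hzy⟩)
  have hxy : dist (α tr) (α tR) ≤ 2*m + D := by
    have ht4 := dist_triangle4 (α tr) zx zy (α tR)
    have hd1 : dist (α tr) zx ≤ m := by rw [hzx]; exact hαr
    have hd2 : dist zy (α tR) ≤ m := by rw [dist_comm, hzy]; exact hαR
    linarith
  have hu : tR - tr ≤ (2*m + D + Q) * q := by
    have h1 := (hαq tr (Set.mem_Ici.2 htr0) tR (Set.mem_Ici.2 htR0)).1
    rw [abs_sub_comm, abs_of_nonneg (sub_nonneg.2 htrR)] at h1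
    have h1q : (1/q)*(tR - tr) ≤ 2*m + D + Q := by linarith
    rw [one_div, inv_mul_eq_div] at h1q
    exact le_trans (le_of_eq rfl) ((div_le_iff₀ hq0).1 h1q)
  have hu2 : (tR - tr)/(2*q) ≤ (2*m + D + Q)/2 := by
    rw [div_le_div_iff₀ (by positivity) (by positivity)]
    linarith
  have hQm3 : (Q+m)/(3*q^2) ≤ (Q+m)/3 :=
    div_le_div_of_nonneg_left (by linarith) (by norm_num) (by nlinarith)
  -- D ≤ 13m/3
  have hDm : D ≤ 13/3 * m := by linarith
  have hsq : 0 ≤ Real.sqrt R := Real.sqrt_nonneg R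
  linarith
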